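/- Let μ : H₂' → H₂ be a homomorphism of groups, let H₁ ≤ H₂ and H₁' ≤ H₂' be subgroups such that μ(H₂') ∩ H₁ = μ(H₁') (equality of subsets of H₂) and ker μ ⊆ H₁'. Let k be a field and (π, V) a k-linear representation of H₁ (note that μ(H₁') ⊆ H₁, so π ∘ (μ restricted to H₁') is a representation of H₁' on V). Then the induced representation Ind_{H₁'}^{H₂'}(π ∘ μ|_{H₁'}) is a subrepresentation of the pullback μ*(Ind_{H₁}^{H₂} π); that is, there exists an injective k-linear map from the space of Ind_{H₁'}^{H₂'}(π ∘ μ|_{H₁'}) to the space of Ind_{H₁}^{H₂} π that intertwines the H₂'-action on the source with the H₂'-action on the target given by acting through μ. -/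

import Mathlib

/-!
Extend `f ∈ Ind_{H₁'}^{H₂'}(π ∘ μ)` to `H₂` by `T f (μ b' * a) = π a⁻¹ (f b')` on the set
`μ(H₂') H₁` and by `0` off it. The two hypotheses on `μ` combine to `μ⁻¹(H₁) ≤ H₁'`, which is
exactly what makes this well defined: if `μ b' * a = μ c * d` then `b'⁻¹ c ∈ μ⁻¹(H₁) ≤ H₁'`,
and the `H₁'`-equivariance of `f` matches the two values. Evaluating `T f` on `μ(H₂')` recovers
`f`, so `T` is injective.
-/

open scoped Pointwise

section Ind

variable (k : Type*) [Field k] {V : Type*} [AddCommGroup V] [Module k V]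
variable {B : Type*} [Group B]

/-- The space of the induced representation `Ind_A^B σ`: functions `f : B → V`
with `f (b * a) = σ a⁻¹ (f b)` for all `b ∈ B`, `a ∈ A`. -/
def indSpace (A : Subgroup B) (σ : Representation k A V) : Submodule k (B → V) where
  carrier := {f | ∀ (b : B) (a : A), f (b * a) = σ a⁻¹ (f b)}
  add_mem' := by
    intro f g hf hg b a
    simp only [Pi.add_apply, hf b a, hg b a, map_add]
  zero_mem' := by intro b a; simp
  smul_mem' := by
    intro c f hf b a
    simp only [Pi.smul_apply, hf b a, map_smul]

theorem mem_indSpace {A : Subgroup B} {σ : Representation k A V} {f : B → V} :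
    f ∈ indSpace k A σ ↔ ∀ (b : B) (a : A), f (b * a) = σ a⁻¹ (f b) := Iff.rfl

/-- The induced representation `Ind_A^B σ`, where `B` acts by `(b₀ • f) b = f (b₀⁻¹ * b)`. -/
def indRep (A : Subgroup B) (σ : Representation k A V) :
    Representation k B (indSpace k A σ) where
  toFun b₀ :=
    { toFun := fun f => ⟨fun b => (f : B → V) (b₀⁻¹ * b), fun b a => by
        simpa [mul_assoc] using f.2 (b₀⁻¹ * b) a⟩
      map_add' := fun f g => rfl
      map_smul' := fun c f => rfl }
  map_one' := by
    apply LinearMap.ext; intro f; apply Subtype.ext; funext b; simp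
  map_mul' x y := by
    apply LinearMap.ext; intro f; apply Subtype.ext; funext b
    simp [mul_assoc]

/-- Pullback of a representation of a subgroup `A` along a group homomorphism `μ`
mapping the subgroup `A'` into `A`. -/
def pullbackRep {G' G : Type*} [Group G'] [Group G] (μ : G' →* G)
    (A : Subgroup G) (A' : Subgroup G') (h : ∀ x : A', μ x ∈ A)
    (σ : Representation k A V) : Representation k A' V :=
  MonoidHom.comp σ ((μ.comp A'.subtype).codRestrict A h)

end Ind

theorem Subgroup.comap_le_of_range_inter_subset_image {G' G : Type*} [Group G'] [Group G]
    (μ : G' →* G) {A : Subgroup G} {A' : Subgroup G'}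
    (hinter : Set.range μ ∩ (A : Set G) ⊆ μ '' (A' : Set G')) (hker : μ.ker ≤ A') :
    A.comap μ ≤ A' := by
  intro x hx
  obtain ⟨e, he, hxe⟩ := hinter ⟨⟨x, rfl⟩, hx⟩
  have hker' : x * e⁻¹ ∈ A' := hker (by simp [hxe])
  simpa using mul_mem hker' he

section ExtendByZero

variable {k : Type*} {V : Type*} {G' G : Type*} [Group G'] [Group G] (μ : G' →* G)
  {A : Subgroup G}

open Classical in
noncomputable def extendByZero [CommSemiring k] [AddCommMonoid V] [Module k V]
    (σ : Representation k A V) : (G' → V) →ₗ[k] (G → V) :=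
  LinearMap.pi fun b =>
    if h : ∃ p : G' × A, b = μ p.1 * p.2 then σ h.choose.2⁻¹ ∘ₗ LinearMap.proj h.choose.1
    else 0

theorem extendByZero_apply_of_not_exists [CommSemiring k] [AddCommMonoid V] [Module k V]
    (σ : Representation k A V) (f : G' → V) {b : G} (hb : ¬∃ p : G' × A, b = μ p.1 * p.2) :
    extendByZero μ σ f b = 0 := by
  simp [extendByZero, hb]

variable [Field k] [AddCommGroup V] [Module k V] (σ : Representation k A V)
  {A' : Subgroup G'} {hmap : ∀ x : A', μ x ∈ A}

theorem inv_apply_eq_of_map_mul_eq (hcomap : A.comap μ ≤ A') {f : G' → V}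
    (hf : f ∈ indSpace k A' (pullbackRep k μ A A' hmap σ)) {b' c : G'} {a d : A}
    (h : μ b' * a = μ c * d) : σ a⁻¹ (f b') = σ d⁻¹ (f c) := by
  have hμ : μ (b'⁻¹ * c) = a * (d : G)⁻¹ := by
    rw [map_mul, map_inv, inv_mul_eq_iff_eq_mul, ← mul_assoc, h, mul_inv_cancel_right]
  have hx : b'⁻¹ * c ∈ A' :=
    hcomap (by simpa only [Subgroup.mem_comap, hμ] using mul_mem a.2 (inv_mem d.2))
  have hfc : f c = σ (d * a⁻¹) (f b') := by
    have hσ : ((μ.comp A'.subtype).codRestrict A hmap) ⟨b'⁻¹ * c, hx⟩⁻¹ = d * a⁻¹ := by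
      ext
      change μ (b'⁻¹ * c)⁻¹ = (d : G) * (a : G)⁻¹
      rw [map_inv, hμ, mul_inv_rev, inv_inv]
    simpa [pullbackRep, hσ] using hf b' ⟨b'⁻¹ * c, hx⟩
  rw [hfc, ← Module.End.mul_apply, ← map_mul, inv_mul_cancel_left]

theorem extendByZero_apply_map_mul (hcomap : A.comap μ ≤ A') {f : G' → V}
    (hf : f ∈ indSpace k A' (pullbackRep k μ A A' hmap σ)) (b' : G') (a : A) :
    extendByZero μ σ f (μ b' * a) = σ a⁻¹ (f b') := by
  have h : ∃ p : G' × A, μ b' * a = μ p.1 * p.2 := ⟨(b', a), rfl⟩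
  simp only [extendByZero, LinearMap.pi_apply, dif_pos h, LinearMap.coe_comp,
    Function.comp_apply, LinearMap.proj_apply]
  exact (inv_apply_eq_of_map_mul_eq μ σ hcomap hf h.choose_spec).symm

theorem extendByZero_apply_map (hcomap : A.comap μ ≤ A') {f : G' → V}
    (hf : f ∈ indSpace k A' (pullbackRep k μ A A' hmap σ)) (b' : G') :
    extendByZero μ σ f (μ b') = f b' := by
  simpa using extendByZero_apply_map_mul μ σ hcomap hf b' 1

theorem extendByZero_mem_indSpace (hcomap : A.comap μ ≤ A') {f : G' → V}
    (hf : f ∈ indSpace k A' (pullbackRep k μ A A' hmap σ)) :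
    extendByZero μ σ f ∈ indSpace k A σ := by
  intro b a
  by_cases hb : ∃ p : G' × A, b = μ p.1 * p.2
  · obtain ⟨⟨b', a₀⟩, rfl⟩ := hb
    rw [mul_assoc, ← Subgroup.coe_mul, extendByZero_apply_map_mul μ σ hcomap hf,
      extendByZero_apply_map_mul μ σ hcomap hf, mul_inv_rev, map_mul, Module.End.mul_apply]
  · have hba : ¬∃ p : G' × A, b * a = μ p.1 * p.2 := fun ⟨p, hp⟩ =>
      hb ⟨(p.1, p.2 * a⁻¹), by
        simp only [Subgroup.coe_mul, Subgroup.coe_inv, ← mul_assoc, ← hp, mul_inv_cancel_right]⟩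
    rw [extendByZero_apply_of_not_exists μ σ _ hba, extendByZero_apply_of_not_exists μ σ _ hb,
      map_zero]

theorem extendByZero_indRep (hcomap : A.comap μ ≤ A') (h : G')
    (f : indSpace k A' (pullbackRep k μ A A' hmap σ)) :
    extendByZero μ σ (indRep k A' (pullbackRep k μ A A' hmap σ) h f : G' → V)
      = fun b => extendByZero μ σ (f : G' → V) ((μ h)⁻¹ * b) := by
  funext b
  by_cases hb : ∃ p : G' × A, b = μ p.1 * p.2
  · obtain ⟨⟨b', a⟩, rfl⟩ := hb
    rw [← mul_assoc, ← map_inv, ← map_mul,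
      extendByZero_apply_map_mul μ σ hcomap (indRep k A' _ h f).2,
      extendByZero_apply_map_mul μ σ hcomap f.2]
    rfl
  · have hb' : ¬∃ p : G' × A, (μ h)⁻¹ * b = μ p.1 * p.2 := fun ⟨p, hp⟩ =>
      hb ⟨(h * p.1, p.2), by rw [map_mul, mul_assoc, ← hp, mul_inv_cancel_left]⟩
    rw [extendByZero_apply_of_not_exists μ σ _ hb, extendByZero_apply_of_not_exists μ σ _ hb']

end ExtendByZero

/-- Let `μ : H₂' → H₂` be a homomorphism of groups, `H₁ ≤ H₂`, `H₁' ≤ H₂'`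
subgroups with `μ(H₂') ∩ H₁ = μ(H₁')` and `ker μ ⊆ H₁'`.  Let `(π, V)` be a `k`-linear
representation of `H₁` (so that, since `μ(H₁') ⊆ H₁`, the composite `π ∘ μ|_{H₁'}` is a
representation of `H₁'` on `V`).  Then `Ind_{H₁'}^{H₂'} (π ∘ μ|_{H₁'})` is a subrepresentation
of the pullback `μ* (Ind_{H₁}^{H₂} π)`: there is an injective `k`-linear map intertwining the
`H₂'`-action on the source with the `H₂'`-action (through `μ`) on the target. -/
theorem induced_sub_pullback_induced
    {k : Type*} [Field k] {V : Type*} [AddCommGroup V] [Module k V]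
    {H₂' H₂ : Type*} [Group H₂'] [Group H₂] (μ : H₂' →* H₂)
    (H₁ : Subgroup H₂) (H₁' : Subgroup H₂')
    (hmap : ∀ x : H₁', μ x ∈ H₁)
    (hinter : Set.range μ ∩ (H₁ : Set H₂) = μ '' (H₁' : Set H₂'))
    (hker : μ.ker ≤ H₁')
    (π : Representation k H₁ V) :
    ∃ T : indSpace k H₁' (pullbackRep k μ H₁ H₁' hmap π) →ₗ[k] indSpace k H₁ π,
      Function.Injective T ∧
        ∀ (h : H₂') (f : indSpace k H₁' (pullbackRep k μ H₁ H₁' hmap π)),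
          T (indRep k H₁' (pullbackRep k μ H₁ H₁' hmap π) h f)
            = indRep k H₁ π (μ h) (T f) := by
  have hcomap : H₁.comap μ ≤ H₁' :=
    Subgroup.comap_le_of_range_inter_subset_image μ hinter.subset hker
  refine ⟨(extendByZero μ π).restrict fun f hf => extendByZero_mem_indSpace μ π hcomap hf,
    fun f g hfg => ?_, fun h f => ?_⟩
  · ext b'
    have hfg' := congrArg (fun T : indSpace k H₁ π => (T : H₂ → V) (μ b')) hfg
    simpa only [LinearMap.coe_restrict_apply, extendByZero_apply_map μ π hcomap f.2,
      extendByZero_apply_map μ π hcomap g.2] using hfg'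
  · exact Subtype.ext (extendByZero_indRep μ π hcomap h f)
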